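/- arXiv:1212.6913 — 7 statements merged into one kernel-verified Lean document; each statement's English description precedes it below -/
import Mathlib

section
/- Let x : ℝ → 𝔹ⁿ be a function, μ ∈ 𝔹ⁿ, T > 0, and t₀, t₁ ∈ ℝ with t₀ < t₁ < t₀ + T. Assume that T_μ^x = (-∞, t₀) ∪ ⋃_{k∈ℕ} [t₁ + kT, t₀ + (k+1)T). Then for every t' ∉ [t₁ - T, t₀), at least one of the following fails: (i) (-∞, t'] ⊆ T_μ^x; (ii) for every t ∈ T_μ^x ∩ [t', ∞) and every z ∈ ℤ with t + zT ≥ t', one has t + zT ∈ T_μ^x. -/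
/-! The pattern is absent on the gap `[t₀, t₁)` and present before it. If `t₀ ≤ t'`, the gap point
`t₀` lies in `(-∞, t']`, so (P1) fails. If `t' < t₁ - T`, a point `t ≥ t'` just below `t₀` (namely
`max t' (t₀ - T)`) is shifted by one period into the gap, so (P2) fails. -/

open Set

lemma notMem_Iio_union_iUnion_Ico_of_mem_Ico {t₀ t₁ T p : ℝ} (hT : 0 ≤ T)
    (hp : p ∈ Ico t₀ t₁) :
    p ∉ Iio t₀ ∪ ⋃ k : ℕ, Ico (t₁ + (k : ℝ) * T) (t₀ + ((k : ℝ) + 1) * T) := by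
  rintro (hlt | hk)
  · exact not_lt.2 hp.1 hlt
  · obtain ⟨k, hk⟩ := mem_iUnion.1 hk
    have : 0 ≤ (k : ℝ) * T := mul_nonneg k.cast_nonneg hT
    linarith [hk.1, hp.2]

lemma exists_mem_Ici_add_notMem_of_gap {S : Set ℝ} {t₀ t₁ T t' : ℝ}
    (h01 : t₀ < t₁) (h1T : t₁ < t₀ + T) (hpre : Iio t₀ ⊆ S) (hgap : ∀ p ∈ Ico t₀ t₁, p ∉ S)
    (ht' : t' < t₁ - T) : ∃ t ∈ S ∩ Ici t', t' ≤ t + T ∧ t + T ∉ S := by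
  refine ⟨max t' (t₀ - T), ⟨hpre ?_, mem_Ici.2 (le_max_left _ _)⟩, ?_, hgap _ ⟨?_, ?_⟩⟩
  · exact mem_Iio.2 (max_lt (by linarith) (by linarith))
  · linarith [le_max_left t' (t₀ - T)]
  · linarith [le_max_right t' (t₀ - T)]
  · linarith [max_lt ht' (show t₀ - T < t₁ - T by linarith)]

theorem stmt_1_general (n : ℕ) (x : ℝ → (Fin n → Bool)) (μ : Fin n → Bool)
    (T t₀ t₁ : ℝ) (h01 : t₀ < t₁) (h1T : t₁ < t₀ + T)
    (hset : {t : ℝ | x t = μ} =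
      Set.Iio t₀ ∪ ⋃ k : ℕ, Set.Ico (t₁ + (k : ℝ) * T) (t₀ + ((k : ℝ) + 1) * T)) :
    ∀ t' : ℝ, t' ∉ Set.Ico (t₁ - T) t₀ →
      ¬ (Set.Iic t' ⊆ {t : ℝ | x t = μ}) ∨
      ¬ (∀ t ∈ {t : ℝ | x t = μ} ∩ Set.Ici t', ∀ z : ℤ,
        t' ≤ t + (z : ℝ) * T → t + (z : ℝ) * T ∈ {t : ℝ | x t = μ}) := by
  intro t' ht'
  have hT : 0 ≤ T := by linarith
  have hpre : Iio t₀ ⊆ {t : ℝ | x t = μ} := hset ▸ subset_union_left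
  have hgap : ∀ p ∈ Ico t₀ t₁, p ∉ {t : ℝ | x t = μ} := fun p hp =>
    hset ▸ notMem_Iio_union_iUnion_Ico_of_mem_Ico hT hp
  rw [mem_Ico, not_and_or, not_le, not_lt] at ht'
  rcases ht' with ht' | ht'
  · obtain ⟨t, ht, hle, hnot⟩ := exists_mem_Ici_add_notMem_of_gap h01 h1T hpre hgap ht'
    exact Or.inr fun hP2 => hnot (by simpa using hP2 t ht 1 (by simpa using hle))
  · exact Or.inl fun hP1 => hgap t₀ ⟨le_rfl, h01⟩ (hP1 ht')

/-- With the same hypotheses, for every `t' ∉ [t₁ - T, t₀)` at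
least one of the properties (P1), (P2) fails. -/
theorem stmt_1 (n : ℕ) (x : ℝ → (Fin n → Bool)) (μ : Fin n → Bool)
    (T t₀ t₁ : ℝ) (hT : 0 < T) (h01 : t₀ < t₁) (h1T : t₁ < t₀ + T)
    (hset : {t : ℝ | x t = μ} =
      Set.Iio t₀ ∪ ⋃ k : ℕ, Set.Ico (t₁ + (k : ℝ) * T) (t₀ + ((k : ℝ) + 1) * T)) :
    ∀ t' : ℝ, t' ∉ Set.Ico (t₁ - T) t₀ →
      ¬ (Set.Iic t' ⊆ {t : ℝ | x t = μ}) ∨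
      ¬ (∀ t ∈ {t : ℝ | x t = μ} ∩ Set.Ici t', ∀ z : ℤ,
        t' ≤ t + (z : ℝ) * T → t + (z : ℝ) * T ∈ {t : ℝ | x t = μ}) :=
  stmt_1_general n x μ T t₀ t₁ h01 h1T hset
end

section
/- Let x : ℝ → 𝔹ⁿ be a function, μ ∈ 𝔹ⁿ, T > 0, and t₀, t₁ ∈ ℝ with t₀ < t₁ < t₀ + T. Assume that T_μ^x = (-∞, t₀) ∪ ⋃_{k∈ℕ} [t₁ + kT, t₀ + (k+1)T). If T' > 0 and t'' ∈ ℝ are such that (-∞, t''] ⊆ T_μ^x and for every t ∈ T_μ^x ∩ [t'', ∞) and every z ∈ ℤ with t + zT' ≥ t'' one has t + zT' ∈ T_μ^x, then T' ≥ T. -/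
/-!
If `T' < T`, start at the point `t = max t₁ (t₀ + T - T')` of the first interval `[t₁, t₀ + T)`
of `T_μ^x`; one shift by `T'` lands in the gap `[t₀ + T, t₁ + T)`. Property (P1) forces
`t'' < t₀`, because `t₀ ∉ T_μ^x`, so (P2) applies to `t` and gives a contradiction.
-/

open Set

def pulseSet (t₀ t₁ T : ℝ) : Set ℝ :=
  Iio t₀ ∪ ⋃ k : ℕ, Ico (t₁ + (k : ℝ) * T) (t₀ + ((k : ℝ) + 1) * T)

theorem Ico_subset_pulseSet (t₀ t₁ T : ℝ) : Ico t₁ (t₀ + T) ⊆ pulseSet t₀ t₁ T := fun s hs =>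
  Or.inr <| mem_iUnion.2 ⟨0, by simpa using hs⟩

theorem disjoint_Ico_pulseSet {t₀ t₁ T : ℝ} (hT : 0 ≤ T) (k : ℕ) :
    Disjoint (Ico (t₀ + k * T) (t₁ + k * T)) (pulseSet t₀ t₁ T) := by
  refine disjoint_left.2 fun s ⟨hs₀, hs₁⟩ hs => ?_
  have hkT : 0 ≤ (k : ℝ) * T := by positivity
  rcases hs with hs | hs
  · exact absurd (mem_Iio.1 hs) (by linarith)
  obtain ⟨j, hj₁, hj₀⟩ := mem_iUnion.1 hs
  rcases lt_or_ge j k with hjk | hkj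
  · have : ((j : ℝ) + 1) * T ≤ k * T := by
      gcongr
      exact_mod_cast hjk
    linarith
  · have : (k : ℝ) * T ≤ j * T := by gcongr
    linarith

theorem sub_le_of_add_mem {A : Set ℝ} {t'' T' c d e : ℝ} (hT' : 0 < T')
    (hA : ∀ t ∈ A, t'' ≤ t → t + T' ∈ A) (hc : t'' ≤ c) (hcd : c < d) (hde : d < e)
    (hrun : Ico c d ⊆ A) (hgap : Disjoint (Ico d e) A) : e - c ≤ T' := by
  by_contra! h
  set t := max c (d - T')
  have ht : t ∈ A := hrun ⟨le_max_left _ _, max_lt hcd (by linarith)⟩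
  have hshift : t + T' ∈ Ico d e := by
    constructor
    · linarith [le_max_right c (d - T')]
    · rcases max_cases c (d - T') with ⟨he, _⟩ | ⟨he, _⟩ <;> linarith
  exact disjoint_left.1 hgap hshift (hA t ht (hc.trans (le_max_left _ _)))

/-- With the same hypotheses, any `T' > 0` admitting a `t''`
satisfying (P1) and (P2) (with `T'` in place of `T`) satisfies `T' ≥ T`. -/
theorem stmt_2 (n : ℕ) (x : ℝ → (Fin n → Bool)) (μ : Fin n → Bool)
    (T t₀ t₁ : ℝ) (hT : 0 < T) (h01 : t₀ < t₁) (h1T : t₁ < t₀ + T)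
    (hset : {t : ℝ | x t = μ} =
      Set.Iio t₀ ∪ ⋃ k : ℕ, Set.Ico (t₁ + (k : ℝ) * T) (t₀ + ((k : ℝ) + 1) * T))
    (T' t'' : ℝ) (hT' : 0 < T')
    (hP1 : Set.Iic t'' ⊆ {t : ℝ | x t = μ})
    (hP2 : ∀ t ∈ {t : ℝ | x t = μ} ∩ Set.Ici t'', ∀ z : ℤ,
      t'' ≤ t + (z : ℝ) * T' → t + (z : ℝ) * T' ∈ {t : ℝ | x t = μ}) :
    T' ≥ T := by
  change _ = pulseSet t₀ t₁ T at hset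
  rw [hset] at hP1 hP2
  have ht'' : t'' < t₀ := lt_of_not_ge fun h =>
    disjoint_left.1 (disjoint_Ico_pulseSet hT.le 0) (by simpa using h01) (hP1 h)
  have hshift : ∀ t ∈ pulseSet t₀ t₁ T, t'' ≤ t → t + T' ∈ pulseSet t₀ t₁ T :=
    fun t ht h => by simpa using hP2 t ⟨ht, h⟩ 1 (by push_cast; linarith)
  have hgap : Disjoint (Ico (t₀ + T) (t₁ + T)) (pulseSet t₀ t₁ T) := by
    simpa using disjoint_Ico_pulseSet hT.le 1
  have := sub_le_of_add_mem hT' hshift (by linarith) h1T (by linarith)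
    (Ico_subset_pulseSet t₀ t₁ T) hgap
  linarith
end

section
/- Let x : ℝ → 𝔹ⁿ be a function, μ ∈ 𝔹ⁿ, T > 0, and t₀, t₁ ∈ ℝ with t₀ < t₁ < t₀ + T. Assume that T_μ^x = (-∞, t₀) ∪ ⋃_{k∈ℕ} [t₁ + kT, t₀ + (k+1)T). If T' > 0 and t'' ∈ ℝ are such that (-∞, t''] ⊆ T_μ^x and for every t ∈ T_μ^x ∩ [t'', ∞) and every z ∈ ℤ with t + zT' ≥ t'' one has t + zT' ∈ T_μ^x, then t'' ∈ [t₁ - T', t₀). -/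
/-! The set `{t | x t = μ}` contains `(-∞, t₀)` but misses the gap `[t₀, t₁)`. Hence (P1) forces
`t'' < t₀`, and if `t'' < t₁ - T'` there is a point `t < t₀` with `t ≥ t''` whose shift `t + T'`
falls into the gap, contradicting (P2) for `z = 1`. -/

open Set

lemma disjoint_Ico_Iio_union_iUnion_Ico {T t₀ t₁ : ℝ} (hT : 0 ≤ T) :
    Disjoint (Ico t₀ t₁) (Iio t₀ ∪ ⋃ k : ℕ, Ico (t₁ + (k : ℝ) * T) (t₀ + ((k : ℝ) + 1) * T)) := by
  refine Set.disjoint_left.2 fun s ⟨hs₀, hs₁⟩ hs => ?_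
  simp only [mem_union, mem_Iio, mem_iUnion, mem_Ico] at hs
  rcases hs with hs | ⟨k, hk, -⟩
  · exact hs.not_ge hs₀
  · have : 0 ≤ (k : ℝ) * T := by positivity
    linarith

lemma sub_le_of_add_mem_s3 {S : Set ℝ} {t₀ t₁ T' t'' : ℝ} (hIio : Iio t₀ ⊆ S)
    (hgap : Disjoint (Ico t₀ t₁) S) (h01 : t₀ < t₁) (hT' : 0 < T') (ht'' : t'' < t₀)
    (hshift : ∀ t ∈ S, t'' ≤ t → t + T' ∈ S) : t₁ - T' ≤ t'' := by
  by_contra! h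
  obtain ⟨t, hlo, hhi⟩ : ∃ t, max t'' (t₀ - T') < t ∧ t < min t₀ (t₁ - T') :=
    exists_between (max_lt (lt_min ht'' h) (lt_min (by linarith) (by linarith)))
  rw [max_lt_iff] at hlo
  rw [lt_min_iff] at hhi
  exact hgap.notMem_of_mem_left ⟨by linarith, by linarith⟩
    (hshift t (hIio hhi.1) hlo.1.le)

theorem stmt_3_general (n : ℕ) (x : ℝ → (Fin n → Bool)) (μ : Fin n → Bool)
    (T t₀ t₁ : ℝ) (hT : 0 < T) (h01 : t₀ < t₁)
    (hset : {t : ℝ | x t = μ} =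
      Set.Iio t₀ ∪ ⋃ k : ℕ, Set.Ico (t₁ + (k : ℝ) * T) (t₀ + ((k : ℝ) + 1) * T))
    (T' t'' : ℝ) (hT' : 0 < T')
    (hP1 : Set.Iic t'' ⊆ {t : ℝ | x t = μ})
    (hP2 : ∀ t ∈ {t : ℝ | x t = μ} ∩ Set.Ici t'', ∀ z : ℤ,
      t'' ≤ t + (z : ℝ) * T' → t + (z : ℝ) * T' ∈ {t : ℝ | x t = μ}) :
    t'' ∈ Set.Ico (t₁ - T') t₀ := by
  have hgap : Disjoint (Ico t₀ t₁) {t : ℝ | x t = μ} :=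
    hset ▸ disjoint_Ico_Iio_union_iUnion_Ico hT.le
  have hIio : Iio t₀ ⊆ {t : ℝ | x t = μ} := hset ▸ subset_union_left
  have ht'' : t'' < t₀ := by
    by_contra! h
    exact hgap.notMem_of_mem_left ⟨le_rfl, h01⟩ (hP1 h)
  refine ⟨sub_le_of_add_mem_s3 hIio hgap h01 hT' ht'' fun t ht htt'' => ?_, ht''⟩
  simpa using hP2 t ⟨ht, htt''⟩ 1 (by simp; linarith)

/-- With the same hypotheses, any `t''` witnessing (P1) and (P2)
for some `T' > 0` must lie in `[t₁ - T', t₀)`. -/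
theorem stmt_3 (n : ℕ) (x : ℝ → (Fin n → Bool)) (μ : Fin n → Bool)
    (T t₀ t₁ : ℝ) (hT : 0 < T) (h01 : t₀ < t₁) (h1T : t₁ < t₀ + T)
    (hset : {t : ℝ | x t = μ} =
      Set.Iio t₀ ∪ ⋃ k : ℕ, Set.Ico (t₁ + (k : ℝ) * T) (t₀ + ((k : ℝ) + 1) * T))
    (T' t'' : ℝ) (hT' : 0 < T')
    (hP1 : Set.Iic t'' ⊆ {t : ℝ | x t = μ})
    (hP2 : ∀ t ∈ {t : ℝ | x t = μ} ∩ Set.Ici t'', ∀ z : ℤ,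
      t'' ≤ t + (z : ℝ) * T' → t + (z : ℝ) * T' ∈ {t : ℝ | x t = μ}) :
    t'' ∈ Set.Ico (t₁ - T') t₀ :=
  stmt_3_general n x μ T t₀ t₁ hT h01 hset T' t'' hT' hP1 hP2
end

section
/- Let x : ℝ → 𝔹ⁿ be a function, μ ∈ 𝔹ⁿ, T > 0, and t₀, t₁ ∈ ℝ with t₀ < t₁ < t₀ + T. Assume that T_μ^x = (-∞, t₀) ∪ ⋃_{k∈ℕ} [t₁ + kT, t₀ + (k+1)T). Then T is the least element of the set of all T' > 0 for which there exists t'' ∈ ℝ such that (-∞, t''] ⊆ T_μ^x and for every t ∈ T_μ^x ∩ [t'', ∞) and every z ∈ ℤ with t + zT' ≥ t'' one has t + zT' ∈ T_μ^x; that is, T itself belongs to this set (with any t'' ∈ [t₁ - T, t₀)) and every member T' of this set satisfies T' ≥ T. -/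
/-! Above `t₁ - T`, the set `T_μ^x` coincides with the `T`-periodic union of the pulses
`[t₁ + kT, t₀ + (k+1)T)` over all `k ∈ ℤ`, which makes `T` a period. Conversely, a period
`T' < T` is impossible: the time `max t₁ (t₀ + T')` lies in the first pulse, while shifting it
back by `T'` lands in the gap `[t₀, t₁)`, which every admissible `t''` lies below. -/

open Set

def pulseTrain (t₀ t₁ T : ℝ) : Set ℝ :=
  Iio t₀ ∪ ⋃ k : ℕ, Ico (t₁ + (k : ℝ) * T) (t₀ + ((k : ℝ) + 1) * T)

/-- `T` is a period of the point whose time set is `S`, in the paper's sense, with witness `t'`. -/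
def IsPeriodFrom (S : Set ℝ) (T t' : ℝ) : Prop :=
  Iic t' ⊆ S ∧ ∀ t ∈ S ∩ Ici t', ∀ z : ℤ, t' ≤ t + (z : ℝ) * T → t + (z : ℝ) * T ∈ S

section IsPeriodFrom

variable {S : Set ℝ} {T t' : ℝ}

lemma IsPeriodFrom.lt_of_notMem (h : IsPeriodFrom S T t') {a : ℝ} (ha : a ∉ S) : t' < a :=
  lt_of_not_ge fun hle => ha (h.1 hle)

lemma IsPeriodFrom.sub_mem (h : IsPeriodFrom S T t') (hT : 0 ≤ T) {t : ℝ} (ht : t ∈ S)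
    (hle : t' ≤ t - T) : t - T ∈ S := by
  have hmem := h.2 t ⟨ht, mem_Ici.2 (by linarith)⟩ (-1) (by push_cast; linarith)
  simpa [sub_eq_add_neg] using hmem

end IsPeriodFrom

section pulseTrain

variable {t₀ t₁ T t : ℝ}

lemma mem_pulseTrain :
    t ∈ pulseTrain t₀ t₁ T ↔ t < t₀ ∨ ∃ k : ℕ, t₁ + k * T ≤ t ∧ t < t₀ + (k + 1) * T := by
  simp [pulseTrain]

lemma mem_pulseTrain_of_int (hT : 0 ≤ T) {m : ℤ} (h₁ : t₁ + m * T ≤ t)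
    (h₀ : t < t₀ + (m + 1) * T) : t ∈ pulseTrain t₀ t₁ T := by
  rcases lt_or_ge m 0 with hm | hm
  · have hm' : (m : ℝ) + 1 ≤ 0 := by exact_mod_cast hm
    have : ((m : ℝ) + 1) * T ≤ 0 := mul_nonpos_of_nonpos_of_nonneg hm' hT
    exact mem_pulseTrain.2 (Or.inl (by linarith))
  · lift m to ℕ using hm
    exact mem_pulseTrain.2 (Or.inr ⟨m, by simpa using h₁, by simpa using h₀⟩)

lemma exists_int_of_mem_pulseTrain (ht : t ∈ pulseTrain t₀ t₁ T) (hge : t₁ - T ≤ t) :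
    ∃ m : ℤ, t₁ + m * T ≤ t ∧ t < t₀ + (m + 1) * T := by
  rcases mem_pulseTrain.1 ht with h | ⟨k, hk₁, hk₀⟩
  · exact ⟨-1, by push_cast; linarith, by push_cast; linarith⟩
  · exact ⟨k, by exact_mod_cast hk₁, by exact_mod_cast hk₀⟩

lemma notMem_pulseTrain (hT : 0 ≤ T) (h₀ : t₀ ≤ t) (h₁ : t < t₁) : t ∉ pulseTrain t₀ t₁ T := by
  rw [mem_pulseTrain]
  rintro (h | ⟨k, hk, -⟩)
  · linarith
  · have : 0 ≤ (k : ℝ) * T := mul_nonneg k.cast_nonneg hT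
    linarith

lemma isPeriodFrom_pulseTrain (hT : 0 ≤ T) {t' : ℝ} (h₁ : t₁ - T ≤ t') (h₀ : t' < t₀) :
    IsPeriodFrom (pulseTrain t₀ t₁ T) T t' := by
  refine ⟨fun s hs => mem_pulseTrain.2 (Or.inl (lt_of_le_of_lt hs h₀)), ?_⟩
  rintro s ⟨hs, hs'⟩ z hz
  obtain ⟨m, hm₁, hm₀⟩ := exists_int_of_mem_pulseTrain hs (h₁.trans hs')
  exact mem_pulseTrain_of_int hT (m := m + z) (by push_cast; linarith) (by push_cast; linarith)

lemma le_of_isPeriodFrom_pulseTrain (hT : 0 < T) (h01 : t₀ < t₁) (h1T : t₁ < t₀ + T)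
    {T' t' : ℝ} (hT' : 0 < T') (h : IsPeriodFrom (pulseTrain t₀ t₁ T) T' t') : T ≤ T' := by
  by_contra! hlt
  have ht' : t' < t₀ := h.lt_of_notMem (notMem_pulseTrain hT.le le_rfl h01)
  set s := max t₁ (t₀ + T')
  have hs : s ∈ pulseTrain t₀ t₁ T :=
    mem_pulseTrain_of_int hT.le (m := 0) (by simp [s]) (by simp [s, h1T]; linarith)
  have hgap : s - T' ∉ pulseTrain t₀ t₁ T := by
    refine notMem_pulseTrain hT.le ?_ ?_
    · linarith [le_max_right t₁ (t₀ + T')]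
    · linarith [max_lt (show t₁ < t₁ + T' by linarith) (show t₀ + T' < t₁ + T' by linarith)]
  exact hgap (h.sub_mem hT'.le hs (by linarith [le_max_right t₁ (t₀ + T')]))

end pulseTrain

/-- With the same hypotheses, `T` is the prime period of `μ`:
`T` itself is a period (witnessed by any `t'' ∈ [t₁ - T, t₀)`), and every
period `T'` satisfies `T' ≥ T`. -/
theorem stmt_4 (n : ℕ) (x : ℝ → (Fin n → Bool)) (μ : Fin n → Bool)
    (T t₀ t₁ : ℝ) (hT : 0 < T) (h01 : t₀ < t₁) (h1T : t₁ < t₀ + T)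
    (hset : {t : ℝ | x t = μ} =
      Set.Iio t₀ ∪ ⋃ k : ℕ, Set.Ico (t₁ + (k : ℝ) * T) (t₀ + ((k : ℝ) + 1) * T)) :
    (∀ t'' ∈ Set.Ico (t₁ - T) t₀,
      Set.Iic t'' ⊆ {t : ℝ | x t = μ} ∧
      (∀ t ∈ {t : ℝ | x t = μ} ∩ Set.Ici t'', ∀ z : ℤ,
        t'' ≤ t + (z : ℝ) * T → t + (z : ℝ) * T ∈ {t : ℝ | x t = μ})) ∧
    (∀ T' : ℝ, 0 < T' →
      (∃ t'' : ℝ, Set.Iic t'' ⊆ {t : ℝ | x t = μ} ∧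
        (∀ t ∈ {t : ℝ | x t = μ} ∩ Set.Ici t'', ∀ z : ℤ,
          t'' ≤ t + (z : ℝ) * T' → t + (z : ℝ) * T' ∈ {t : ℝ | x t = μ})) →
      T' ≥ T) := by
  rw [hset]
  exact ⟨fun t'' ht'' => isPeriodFrom_pulseTrain hT.le ht''.1 ht''.2,
    fun T' hT' ⟨t'', h⟩ => le_of_isPeriodFrom_pulseTrain hT h01 h1T hT' h⟩
end

section
/- Let x : ℝ → 𝔹ⁿ, μ ∈ 𝔹ⁿ, T > 0 and t' ∈ ℝ be such that (-∞, t'] ⊆ T_μ^x and for every t ∈ T_μ^x ∩ [t', ∞) and every z ∈ ℤ with t + zT ≥ t', one has t + zT ∈ T_μ^x. Suppose t₀, t₁ ∈ ℝ and c, v ∈ 𝔹ⁿ satisfy: x(t) = μ for all t < t₀; x(t₀) ≠ μ; t₁ < t₀ + T; there exists ε > 0 with x(ξ) = c for all ξ ∈ (t₀ + T - ε, t₀ + T); x(t) = c for all t ∈ [t₁, t₀ + T); there exists ε > 0 with x(ξ) = v for all ξ ∈ (t₁ - ε, t₁); and v ≠ x(t₁). Then t₁ - T ≤ t' < t₀ <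 t₁. -/
/-!
The interval `(t', t₀)` lies in `T_μ^x`, and `t' < t₀` since `x(t₀) ≠ μ`; one period later,
`(t' + T, t₀ + T)` lies in `T_μ^x` as well. This interval is a left neighbourhood of `t₀ + T`,
which forces `c = μ`. If `t₁ ≤ t₀`, then `x(t₁) = c = μ` and `v = μ`, since `x ≡ μ` left of `t₀`;
if `t₁ - T > t'`, then `t₁` lies inside the shifted interval, so again `x(t₁) = μ = v`.
-/

open Set Filter Topology

section LeftLimit

variable {α : Type*} {x : ℝ → α} {s : ℝ} {v w : α}

lemma eventually_nhdsLT_of_forall_Ioo {ε : ℝ} (hε : 0 < ε)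
    (h : ∀ ξ ∈ Ioo (s - ε) s, x ξ = w) : ∀ᶠ ξ in 𝓝[<] s, x ξ = w :=
  mem_of_superset (Ioo_mem_nhdsLT (by linarith)) h

lemma eq_of_eventually_eq_nhdsLT (hv : ∀ᶠ ξ in 𝓝[<] s, x ξ = v)
    (hw : ∀ᶠ ξ in 𝓝[<] s, x ξ = w) : v = w := by
  obtain ⟨ξ, hξv, hξw⟩ := (hv.and hw).exists
  exact hξv.symm.trans hξw

end LeftLimit

lemma Ioo_add_subset_of_shift_mem {S : Set ℝ} {T t' a b : ℝ} (hT : 0 < T)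
    (hS : ∀ t ∈ S ∩ Ici t', ∀ z : ℤ, t' ≤ t + (z : ℝ) * T → t + (z : ℝ) * T ∈ S)
    (hab : Ioo a b ⊆ S) (ha : t' ≤ a) : Ioo (a + T) (b + T) ⊆ S := by
  intro s ⟨hs₁, hs₂⟩
  have hmem := hS (s - T) ⟨hab ⟨by linarith, by linarith⟩, by simp only [mem_Ici]; linarith⟩ 1
    (by push_cast; linarith)
  simpa using hmem

/-- Under the periodicity hypotheses (P1), (P2) and the defining
properties of `t₀`, `t₁` (with `c` the left limit of `x` at `t₀ + T` and `v`
the left limit of `x` at `t₁`), we have `t₁ - T ≤ t' < t₀ < t₁`. -/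
theorem stmt_6 (n : ℕ) (x : ℝ → (Fin n → Bool)) (μ : Fin n → Bool)
    (T t' : ℝ) (hT : 0 < T)
    (hP1 : Set.Iic t' ⊆ {t : ℝ | x t = μ})
    (hP2 : ∀ t ∈ {t : ℝ | x t = μ} ∩ Set.Ici t', ∀ z : ℤ,
      t' ≤ t + (z : ℝ) * T → t + (z : ℝ) * T ∈ {t : ℝ | x t = μ})
    (t₀ t₁ : ℝ) (c v : Fin n → Bool)
    (h0a : ∀ t < t₀, x t = μ)
    (h0b : x t₀ ≠ μ)
    (h1a : t₁ < t₀ + T)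
    (hc : ∃ ε > 0, ∀ ξ ∈ Set.Ioo (t₀ + T - ε) (t₀ + T), x ξ = c)
    (h1b : ∀ t ∈ Set.Ico t₁ (t₀ + T), x t = c)
    (hv : ∃ ε > 0, ∀ ξ ∈ Set.Ioo (t₁ - ε) t₁, x ξ = v)
    (h1c : v ≠ x t₁) :
    t₁ - T ≤ t' ∧ t' < t₀ ∧ t₀ < t₁ := by
  obtain ⟨ε₁, hε₁, hc⟩ := hc
  obtain ⟨ε₂, hε₂, hv⟩ := hv
  have hv' := eventually_nhdsLT_of_forall_Ioo hε₂ hv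
  have ht'₀ : t' < t₀ := lt_of_not_ge fun h ↦ h0b (hP1 h)
  have hshift : Ioo (t' + T) (t₀ + T) ⊆ {t | x t = μ} :=
    Ioo_add_subset_of_shift_mem hT hP2 (fun t ht ↦ h0a t ht.2) le_rfl
  have hcμ : c = μ := eq_of_eventually_eq_nhdsLT (eventually_nhdsLT_of_forall_Ioo hε₁ hc)
    (mem_of_superset (Ioo_mem_nhdsLT (by linarith)) hshift)
  have ht₀₁ : t₀ < t₁ := by
    by_contra! h
    have hx₁ : x t₁ = μ := (h1b t₁ ⟨le_rfl, h1a⟩).trans hcμ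
    refine h1c ((eq_of_eventually_eq_nhdsLT hv' ?_).trans hx₁.symm)
    filter_upwards [self_mem_nhdsWithin] with ξ hξ using h0a ξ (lt_of_lt_of_le hξ h)
  refine ⟨?_, ht'₀, ht₀₁⟩
  by_contra! h
  have ht₁ : t₁ ∈ Ioo (t' + T) (t₀ + T) := ⟨by linarith, h1a⟩
  have hvμ : v = μ := eq_of_eventually_eq_nhdsLT hv'
    (mem_of_superset (nhdsWithin_le_nhds (isOpen_Ioo.mem_nhds ht₁)) hshift)
  exact h1c (hvμ.trans (hshift ht₁).symm)
end

section
/- Let x : ℝ → 𝔹ⁿ be a signal with initial value μ, let T > 0, and let t₀ ∈ ℝ be such that x(t) = μ for all t < t₀ and x(t₀) ≠ μ. Then there exist t₁ ∈ ℝ and c, v ∈ 𝔹ⁿ such that: t₁ < t₀ + T; there exists ε > 0 with x(ξ) = c for all ξ ∈ (t₀ + T - ε, t₀ + T); x(t) = c for all t ∈ [t₁, t₀ + T); there exists ε > 0 with x(ξ) = v for all ξ ∈ (t₁ - ε, t₁); and v ≠ x(t₁). -/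
/-!
Let `c` be the left limit of `x` at `t₀ + T` and let `t₁` be the infimum of the times `s` with
`x = c` on `[s, t₀ + T)`; the jump at `t₀` bounds these times from below. Right-constancy of `x`
puts `t₁` itself in this set, and if the left limit of `x` at `t₁` were `c` as well, the set
would extend to the left of `t₁`.
-/

open Set Filter

/-- A function `x : ℝ → 𝔹ⁿ` is a signal with initial value `μ` if there is a
strictly increasing sequence of reals, unbounded from above, such that `x`
equals `μ` before the first point and is constant on each interval
`[tₖ, tₖ₊₁)`. -/
def IsSignalWithInit (n : ℕ) (x : ℝ → (Fin n → Bool)) (μ : Fin n → Bool) : Prop :=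
  ∃ tk : ℕ → ℝ, StrictMono tk ∧ (∀ M : ℝ, ∃ k : ℕ, M < tk k) ∧
    (∀ t < tk 0, x t = μ) ∧
    (∀ k : ℕ, ∀ t ∈ Set.Ico (tk k) (tk (k + 1)), x t = x (tk k))

def HasLeftLimit {α : Type*} (x : ℝ → α) (s : ℝ) (v : α) : Prop :=
  ∃ ε > 0, ∀ ξ ∈ Ioo (s - ε) s, x ξ = v

lemma exists_mem_Ico_succ_of_le_of_lt {β : Type*} [LinearOrder β] {t : ℕ → β} {s : β}
    (hs : t 0 ≤ s) (hex : ∃ m, s < t m) : ∃ k, s ∈ Ico (t k) (t (k + 1)) := by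
  classical
  obtain ⟨k, hk⟩ : ∃ k, Nat.find hex = k + 1 :=
    Nat.exists_eq_succ_of_ne_zero fun h => (h ▸ Nat.find_spec hex).not_ge hs
  exact ⟨k, not_lt.mp (Nat.find_min hex (by omega)), hk ▸ Nat.find_spec hex⟩

theorem exists_last_jump_before {α : Type*} {x : ℝ → α}
    (hright : ∀ s, ∃ δ > 0, ∀ t ∈ Ico s (s + δ), x t = x s)
    (hleft : ∀ s, ∃ v, HasLeftLimit x s v) {μ : α} {t₀ u : ℝ} (hu : t₀ < u)
    (h0a : ∀ t < t₀, x t = μ) (h0b : x t₀ ≠ μ) :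
    ∃ t₁ c v, t₁ < u ∧ HasLeftLimit x u c ∧ (∀ t ∈ Ico t₁ u, x t = c) ∧
      HasLeftLimit x t₁ v ∧ v ≠ x t₁ := by
  obtain ⟨c, ε, hε, hc⟩ := hleft u
  set A := {s | ∀ t ∈ Ico s u, x t = c}
  have hA_mem : u - ε / 2 ∈ A := fun t ht => hc t ⟨by linarith [ht.1], ht.2⟩
  have hA_bdd : BddBelow A := by
    refine ⟨t₀, fun s hs => ?_⟩
    by_contra! h
    exact h0b (by rw [hs t₀ ⟨h.le, hu⟩, ← hs s ⟨le_rfl, h.trans hu⟩, h0a s h])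
  set t₁ := sInf A
  have ht₁u : t₁ < u := (csInf_le hA_bdd hA_mem).trans_lt (by linarith)
  have hA_Ioo : ∀ t ∈ Ioo t₁ u, x t = c := by
    rintro t ⟨ht₁t, htu⟩
    obtain ⟨s, hs, hst⟩ := exists_lt_of_csInf_lt ⟨_, hA_mem⟩ ht₁t
    exact hs t ⟨hst.le, htu⟩
  have hx₁ : x t₁ = c := by
    obtain ⟨δ, hδ, hδc⟩ := hright t₁
    obtain ⟨t, ht₁t, ht⟩ := exists_between (lt_min (lt_add_of_pos_right t₁ hδ) ht₁u)
    rw [← hδc t ⟨ht₁t.le, (lt_min_iff.mp ht).1⟩]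
    exact hA_Ioo t ⟨ht₁t, (lt_min_iff.mp ht).2⟩
  have ht₁A : t₁ ∈ A := fun t ⟨ht₁t, htu⟩ =>
    ht₁t.eq_or_lt.elim (fun h => h ▸ hx₁) fun h => hA_Ioo t ⟨h, htu⟩
  obtain ⟨v, ε', hε', hv⟩ := hleft t₁
  refine ⟨t₁, c, v, ht₁u, ⟨ε, hε, hc⟩, ht₁A, ⟨ε', hε', hv⟩, fun hvx => ?_⟩
  have hA_left : t₁ - ε' / 2 ∈ A := fun t ⟨hst, htu⟩ =>
    (lt_or_ge t t₁).elim (fun h => (hv t ⟨by linarith, h⟩).trans (hvx.trans hx₁))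
      fun h => ht₁A t ⟨h, htu⟩
  linarith [csInf_le hA_bdd hA_left]

namespace IsSignalWithInit

variable {n : ℕ} {x : ℝ → (Fin n → Bool)} {μ : Fin n → Bool}

lemma exists_forall_Ico_eq (hx : IsSignalWithInit n x μ) (s : ℝ) :
    ∃ δ > 0, ∀ t ∈ Ico s (s + δ), x t = x s := by
  obtain ⟨tk, -, hunb, hinit, hconst⟩ := hx
  rcases lt_or_ge s (tk 0) with hs | hs
  · refine ⟨tk 0 - s, by linarith, fun t ht => ?_⟩
    rw [hinit t (by linarith [ht.2]), hinit s hs]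
  · obtain ⟨k, hk⟩ := exists_mem_Ico_succ_of_le_of_lt hs (hunb s)
    refine ⟨tk (k + 1) - s, by linarith [hk.2], fun t ht => ?_⟩
    rw [hconst k t ⟨hk.1.trans ht.1, by linarith [ht.2]⟩, hconst k s hk]

lemma exists_hasLeftLimit (hx : IsSignalWithInit n x μ) (s : ℝ) : ∃ v, HasLeftLimit x s v := by
  obtain ⟨tk, hmono, hunb, hinit, hconst⟩ := hx
  rcases le_or_gt s (tk 0) with hs | hs
  · exact ⟨μ, 1, one_pos, fun ξ hξ => hinit ξ (hξ.2.trans_le hs)⟩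
  · have htop : Tendsto tk atTop atTop :=
      tendsto_atTop_atTop_of_monotone hmono.monotone fun M => (hunb M).imp fun _ h => h.le
    obtain ⟨k, hk, hks⟩ := hmono.exists_between_of_tendsto_atTop htop hs
    exact ⟨x (tk k), s - tk k, by linarith, fun ξ hξ =>
      hconst k ξ ⟨by linarith [hξ.1], hξ.2.trans_le hks⟩⟩

end IsSignalWithInit

/-- Given a signal `x` with initial value `μ`, `T > 0` and `t₀`
with `x = μ` before `t₀` and `x t₀ ≠ μ`, there exist `t₁ < t₀ + T` and values
`c` (the left limit of `x` at `t₀ + T`) and `v` (the left limit of `x` at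
`t₁`) with `x = c` on `[t₁, t₀ + T)` and `v ≠ x t₁`. -/
theorem stmt_9 (n : ℕ) (x : ℝ → (Fin n → Bool)) (μ : Fin n → Bool)
    (hsig : IsSignalWithInit n x μ)
    (T t₀ : ℝ) (hT : 0 < T)
    (h0a : ∀ t < t₀, x t = μ) (h0b : x t₀ ≠ μ) :
    ∃ t₁ : ℝ, ∃ c v : Fin n → Bool,
      t₁ < t₀ + T ∧
      (∃ ε > 0, ∀ ξ ∈ Set.Ioo (t₀ + T - ε) (t₀ + T), x ξ = c) ∧
      (∀ t ∈ Set.Ico t₁ (t₀ + T), x t = c) ∧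
      (∃ ε > 0, ∀ ξ ∈ Set.Ioo (t₁ - ε) t₁, x ξ = v) ∧
      v ≠ x t₁ :=
  exists_last_jump_before hsig.exists_forall_Ico_eq hsig.exists_hasLeftLimit
    (lt_add_of_pos_right t₀ hT) h0a h0b
end

section
/- Let x : ℝ → 𝔹ⁿ be a signal. Then for every t' ∈ ℝ there exist ε > 0 and a value w ∈ 𝔹ⁿ such that x(ξ) = w for all ξ ∈ (t' - ε, t'); i.e., the left limit x(t'−0) exists at every point, and it does not depend on the choice of the representing sequence (t_k). -/
/- Left of the first switching time the signal is its initial value; any later point `t'`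
lies in some `(tₘ, tₘ₊₁]`, and on `(tₘ, t')` the signal is constant. Uniqueness of the value
holds because any two left neighbourhoods of `t'` intersect, `𝓝[<] t'` being a proper filter. -/

open Filter Set Topology

def IsSignal (n : ℕ) (x : ℝ → (Fin n → Bool)) : Prop :=
  ∃ μ : Fin n → Bool, ∃ tk : ℕ → ℝ, StrictMono tk ∧ (∀ M : ℝ, ∃ k : ℕ, M < tk k) ∧
    (∀ t < tk 0, x t = μ) ∧
    (∀ k : ℕ, ∀ t ∈ Set.Ico (tk k) (tk (k + 1)), x t = x (tk k))

theorem eq_of_eqOn_Ioo_left {β : Type*} {f : ℝ → β} {t ε ε' : ℝ} {w w' : β}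
    (hε : 0 < ε) (hε' : 0 < ε') (hw : ∀ ξ ∈ Ioo (t - ε) t, f ξ = w)
    (hw' : ∀ ξ ∈ Ioo (t - ε') t, f ξ = w') : w' = w := by
  have h : ∀ᶠ ξ in 𝓝[<] t, f ξ = w := mem_of_superset (Ioo_mem_nhdsLT (by linarith)) hw
  have h' : ∀ᶠ ξ in 𝓝[<] t, f ξ = w' := mem_of_superset (Ioo_mem_nhdsLT (by linarith)) hw'
  obtain ⟨ξ, hξ, hξ'⟩ := (h.and h').exists
  rw [← hξ, hξ']

theorem exists_eqOn_Ioo_left_of_piecewiseConst {β : Type*} {f : ℝ → β} {μ : β} {tk : ℕ → ℝ}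
    (hmono : StrictMono tk) (hunb : ∀ M : ℝ, ∃ k : ℕ, M < tk k) (hinit : ∀ t < tk 0, f t = μ)
    (hstep : ∀ k : ℕ, ∀ t ∈ Ico (tk k) (tk (k + 1)), f t = f (tk k)) (t' : ℝ) :
    ∃ ε > 0, ∃ w : β, ∀ ξ ∈ Ioo (t' - ε) t', f ξ = w := by
  rcases le_or_gt t' (tk 0) with hle | hlt
  · exact ⟨1, one_pos, μ, fun ξ hξ => hinit ξ (hξ.2.trans_le hle)⟩
  · have htends : Tendsto tk atTop atTop :=
      tendsto_atTop_atTop_of_monotone hmono.monotone fun M => (hunb M).imp fun _ => le_of_lt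
    obtain ⟨m, hm, hm'⟩ := hmono.exists_between_of_tendsto_atTop htends hlt
    refine ⟨t' - tk m, sub_pos.mpr hm, f (tk m), fun ξ hξ => hstep m ξ ⟨?_, hξ.2.trans_le hm'⟩⟩
    linarith [hξ.1]

/-- A signal has a left limit at every point: for every `t'`
there are `ε > 0` and a value `w` with `x ξ = w` on `(t' - ε, t')`; moreover
this value `w` is unique (hence independent of the representing sequence). -/
theorem stmt_10 (n : ℕ) (x : ℝ → (Fin n → Bool)) (hsig : IsSignal n x) :
    ∀ t' : ℝ, ∃ ε > 0, ∃ w : Fin n → Bool,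
      (∀ ξ ∈ Set.Ioo (t' - ε) t', x ξ = w) ∧
      (∀ ε' > 0, ∀ w' : Fin n → Bool,
        (∀ ξ ∈ Set.Ioo (t' - ε') t', x ξ = w') → w' = w) := by
  intro t'
  obtain ⟨μ, tk, hmono, hunb, hinit, hstep⟩ := hsig
  obtain ⟨ε, hε, w, hw⟩ := exists_eqOn_Ioo_left_of_piecewiseConst hmono hunb hinit hstep t'
  exact ⟨ε, hε, w, hw, fun ε' hε' w' hw' => eq_of_eqOn_Ioo_left hε hε' hw hw'⟩
end
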